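/- arXiv:2007.12716 — 4 statements merged into one kernel-verified Lean document; each statement's English description precedes it below -/
import Mathlib

section
/- Let C be a weakly unital dg category and f ∈ C⁰(x,y) a closed morphism. Define the morphism id_{Cone(f)} on the twisted complex Cone(f) = (x ⊕ y[-1], q = f) by the components (id_x, id_y, ε) where ε = p₂(f,1_x) − p₂(1_y,f) ∈ C⁰(x, y[-1])¹. Then id_{Cone(f)} is closed of degree 0 with respect to the twisted differential dφ = d_C φ + q∘φ − (−1)^{|φ|} φ∘q. -/
open scoped BigOperators

/-- A (small) non-unital dg category over a field `k`.  Hom complexes are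
presented as `k`-modules equipped with a `ℤ`-grading by submodules
(`f ∈ deg x y n` means "`f` is homogeneous of cohomological degree `n`"),
a differential `d` of degree `+1` squaring to zero, and an associative
bilinear composition satisfying the graded Leibniz rule. -/
structure NUDGCat (k : Type) [Field k] where
  Obj : Type
  Hom : Obj → Obj → Type
  [acg : ∀ x y, AddCommGroup (Hom x y)]
  [mod : ∀ x y, Module k (Hom x y)]
  deg : ∀ x y, ℤ → Submodule k (Hom x y)
  d : ∀ {x y}, Hom x y →ₗ[k] Hom x y
  comp : ∀ {x y z}, Hom y z →ₗ[k] Hom x y →ₗ[k] Hom x z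
  d_sq : ∀ {x y} (f : Hom x y), d (d f) = 0
  d_deg : ∀ {x y} (n : ℤ) (f : Hom x y), f ∈ deg x y n → d f ∈ deg x y (n + 1)
  comp_deg : ∀ {x y z} (m n : ℤ) (g : Hom y z) (f : Hom x y),
      g ∈ deg y z m → f ∈ deg x y n → comp g f ∈ deg x z (m + n)
  assoc : ∀ {x y z w} (h : Hom z w) (g : Hom y z) (f : Hom x y),
      comp (comp h g) f = comp h (comp g f)
  leibniz : ∀ {x y z} (m : ℤ) (g : Hom y z) (f : Hom x y), g ∈ deg y z m →
      d (comp g f) = comp (d g) f + (Int.negOnePow m : ℤ) • comp g (d f)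

attribute [instance] NUDGCat.acg NUDGCat.mod

/-- A weakly unital dg category in the sense of Kontsevich–Soibelman.
It is a non-unital dg category together with distinguished closed degree `0`
endomorphisms `idm x = id_x`, and the Taylor components of the structure
`A_∞`-functor `p : A ⊕ k_A → A` evaluated on formal units `1_x`:

* `p2l f = p₂(f, 1_x)`, `p2r f = p₂(1_y, f)`, `p2u x = p₂(1_x, 1_x)`;
* `p3a f g = p₃(f, g, 1)`, `p3b f g = p₃(f, 1, g)`, `p3c f g = p₃(1, f, g)`,
  `p3uuf f = p₃(1, 1, f)`, `p3ufu f = p₃(1, f, 1)`, `p3fuu f = p₃(f, 1, 1)`,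
  `p3uuu x = p₃(1_x, 1_x, 1_x)`;

subject to the Taylor-component identities of the `A_∞`-relation for `p`
(equations (2.4) and (2.5) of the paper). -/
structure WUCat (k : Type) [Field k] extends NUDGCat k where
  idm : ∀ x, Hom x x
  idm_deg : ∀ x, idm x ∈ deg x x 0
  d_idm : ∀ x, d (idm x) = 0
  p2l : ∀ {x y}, Hom x y →ₗ[k] Hom x y
  p2r : ∀ {x y}, Hom x y →ₗ[k] Hom x y
  p2u : ∀ x, Hom x x
  p3a : ∀ {x y z}, Hom y z → Hom x y → Hom x z
  p3b : ∀ {x y z}, Hom y z → Hom x y → Hom x z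
  p3c : ∀ {x y z}, Hom y z → Hom x y → Hom x z
  p3uuf : ∀ {w x}, Hom w x → Hom w x
  p3ufu : ∀ {w x}, Hom w x → Hom w x
  p3fuu : ∀ {w x}, Hom w x → Hom w x
  p3uuu : ∀ x, Hom x x
  p2l_deg : ∀ {x y} (n : ℤ) (f : Hom x y), f ∈ deg x y n → p2l f ∈ deg x y (n - 1)
  p2r_deg : ∀ {x y} (n : ℤ) (f : Hom x y), f ∈ deg x y n → p2r f ∈ deg x y (n - 1)
  p2u_deg : ∀ x, p2u x ∈ deg x x (-1)
  p3a_deg : ∀ {x y z} (m n : ℤ) (f : Hom y z) (g : Hom x y),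
      f ∈ deg y z m → g ∈ deg x y n → p3a f g ∈ deg x z (m + n - 2)
  p3c_deg : ∀ {x y z} (m n : ℤ) (f : Hom y z) (g : Hom x y),
      f ∈ deg y z m → g ∈ deg x y n → p3c f g ∈ deg x z (m + n - 2)
  p3uuf_deg : ∀ {w x} (m : ℤ) (f : Hom w x), f ∈ deg w x m → p3uuf f ∈ deg w x (m - 2)
  p3ufu_deg : ∀ {w x} (m : ℤ) (f : Hom w x), f ∈ deg w x m → p3ufu f ∈ deg w x (m - 2)
  p3fuu_deg : ∀ {w x} (m : ℤ) (f : Hom w x), f ∈ deg w x m → p3fuu f ∈ deg w x (m - 2)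
  p3uuu_deg : ∀ x, p3uuu x ∈ deg x x (-2)
  /-- `d p₂(f,1_x) + p₂(df, 1_x) = f - f ∘ id_x` (equation (2.4) of the paper). -/
  dp2l : ∀ {x y} (f : Hom x y), d (p2l f) + p2l (d f) = f - comp f (idm x)
  /-- `d p₂(1_y,f) + p₂(1_y, df) = f - id_y ∘ f` (equation (2.4) of the paper). -/
  dp2r : ∀ {x y} (f : Hom x y), d (p2r f) + p2r (d f) = f - comp (idm y) f
  dp3a : ∀ {x y z} (m : ℤ) (f : Hom y z) (g : Hom x y), g ∈ deg x y m →
      d (p3a f g) - (Int.negOnePow m : ℤ) • p3a (d f) g - p3a f (d g)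
        = comp f (p2l g) - p2l (comp f g)
  dp3b : ∀ {x y z} (m : ℤ) (f : Hom y z) (g : Hom x y), g ∈ deg x y m →
      d (p3b f g) - (Int.negOnePow m : ℤ) • p3b (d f) g - p3b f (d g)
        = -((Int.negOnePow m : ℤ) • comp (p2l f) g) + comp f (p2r g)
  dp3c : ∀ {x y z} (m : ℤ) (f : Hom y z) (g : Hom x y), g ∈ deg x y m →
      d (p3c f g) - (Int.negOnePow m : ℤ) • p3c (d f) g - p3c f (d g)
        = -((Int.negOnePow m : ℤ) • comp (p2r f) g) + p2r (comp f g)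
  dp3uuf : ∀ {w x} (m : ℤ) (f : Hom w x), f ∈ deg w x m →
      d (p3uuf f) - p3uuf (d f)
        = comp (idm x) (p2r f) - (Int.negOnePow m : ℤ) • comp (p2u x) f
  dp3ufu : ∀ {w x} (f : Hom w x),
      d (p3ufu f) - p3ufu (d f)
        = comp (idm x) (p2l f) - comp (p2r f) (idm w) - p2l f + p2r f
  dp3fuu : ∀ {w x} (f : Hom w x),
      d (p3fuu f) - p3fuu (d f) = comp f (p2u w) - comp (p2l f) (idm w)
  dp3uuu : ∀ x, d (p3uuu x) = comp (idm x) (p2u x) - comp (p2u x) (idm x)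

/-- Let `C` be a weakly unital dg category and `f ∈ C⁰(x,y)`
closed.  The morphism `id_{Cone(f)}` of the twisted complex
`Cone(f) = (x ⊕ y[-1], q = f)`, with components `(id_x, id_y, ε, 0)` where
`ε = p₂(f,1_x) - p₂(1_y,f)`, is closed of degree `0` for the twisted
differential `dφ = d_C φ + q∘φ - (-1)^{|φ|} φ∘q`.  Componentwise (for a
degree-`0` endomorphism `φ = (φ₁₁, φ₂₂, φ₁₂, φ₂₁)` of the cone) the twisted
differential is
`(d φ₁₁ - φ₂₁∘f, d φ₂₂ + f∘φ₂₁, d φ₁₂ + f∘φ₁₁ - φ₂₂∘f, d φ₂₁)`,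
and `ε` is homogeneous of (inner) degree `-1`, matching `C⁰(x, y[-1])`. -/
theorem stmt1 (k : Type) [Field k] (C : WUCat k) {x y : C.Obj} (f : C.Hom x y)
    (hfdeg : f ∈ C.deg x y 0) (hfcl : C.d f = 0) :
    -- the components of `id_{Cone(f)}`
    ∀ ε φ21, ε = C.p2l f - C.p2r f → φ21 = (0 : C.Hom y x) →
      ε ∈ C.deg x y (-1) ∧
      -- the four components of the twisted differential of `id_{Cone(f)}` vanish
      C.d (C.idm x) - C.comp φ21 f = 0 ∧
      C.d (C.idm y) + C.comp f φ21 = 0 ∧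
      C.d ε + C.comp f (C.idm x) - C.comp (C.idm y) f = 0 ∧
      C.d φ21 = 0 := by
  intro ε φ21 hε hφ
  subst hε hφ
  have h1 := C.dp2l f
  have h2 := C.dp2r f
  rw [hfcl, map_zero, add_zero] at h1 h2
  refine ⟨?_, ?_, ?_, ?_, ?_⟩
  · have := sub_mem (C.p2l_deg 0 f hfdeg) (C.p2r_deg 0 f hfdeg)
    simpa using this
  · simp [C.d_idm]
  · simp [C.d_idm]
  · rw [map_sub, h1, h2]; abel
  · simp
end

section
/- Let C be a weakly unital dg category with structure A∞-functor p of degree-(1−n) Taylor components p_n. For objects X⁰,…,Xⁿ of C^pretr and morphisms (or formal units) φⁱ: X^{i-1} → Xⁱ, define P_n^{ab}(φⁿ,…,φ¹) = Σ_{κ ∈ Paths_{ab}} (−1)^{|κ|} p_ℓ(κ_ℓ,…,κ₁), the sum over all paths from X⁰_a to Xⁿ_b through the twisted complexes. Then each component P_n^{ab}(φⁿ,…,φ¹) is homogeneous of degree Σᵢ deg φⁱ − n + 1, so the P_n(φⁿ,…,φ¹) define morphisms X⁰ → Xⁿ in C^pretr of degree Σ deg φⁱ − n + 1. -/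
open scoped BigOperators

/-- (Lemma on degrees of the Taylor components `P_n` of the
structure `A_∞`-functor of the pretriangulated hull.)

A path `κ = (κ₁,…,κ_ℓ)` from `X⁰_a` to `Xⁿ_b` through the twisted complexes
consists of `ℓ` composable arrows, of which the `n` *essential* ones (indexed
by the subset `E ⊆ Fin ℓ`, one for each `φ¹,…,φⁿ`) carry the degrees of the
`φⁱ`'s and the remaining *horizontal* ones (components of the `q`'s) have
degree `1`.  Since `p_ℓ` has degree `1 - ℓ`, the summand
`p_ℓ(κ_ℓ,…,κ₁)` is homogeneous of degree `(∑_r deg κ_r) - ℓ + 1`.  The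
claim: this equals `(∑ deg φⁱ) - n + 1`, so that each component
`P_n^{ab}(φⁿ,…,φ¹) = ∑_κ ±p_ℓ(κ_ℓ,…,κ₁)` is homogeneous of degree
`∑ᵢ deg φⁱ - n + 1`; here homogeneity is recorded by membership in the
graded piece `degM` of the target hom module `M`. -/
theorem stmt7 (k : Type) [Field k] (M : Type) [AddCommGroup M] [Module k M]
    (degM : ℤ → Submodule k M)
    (ℓ n : ℕ) (hn : n ≤ ℓ)
    (κdeg : Fin ℓ → ℤ)              -- degrees of the arrows of the path
    (E : Finset (Fin ℓ))            -- positions of the essential arrows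
    (hcard : E.card = n)
    (hhor : ∀ r, r ∉ E → κdeg r = 1)   -- horizontal arrows have degree 1
    (P : M)
    -- `p_ℓ(κ_ℓ,…,κ₁)` is homogeneous of degree `∑ deg κ_r - ℓ + 1`
    (hP : P ∈ degM ((∑ r, κdeg r) - (ℓ : ℤ) + 1)) :
    -- … hence homogeneous of degree `∑ (essential degrees) - n + 1`
    P ∈ degM ((∑ r ∈ E, κdeg r) - (n : ℤ) + 1) := by
  convert hP using 2
  have h1 : (∑ r, κdeg r) = (∑ r ∈ E, κdeg r) + ∑ r ∈ Eᶜ, κdeg r := by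
    rw [Finset.sum_add_sum_compl]
  have h2 : (∑ r ∈ Eᶜ, κdeg r) = (ℓ - n : ℤ) := by
    rw [Finset.sum_congr rfl (fun r hr => hhor r (Finset.mem_compl.mp hr)),
      Finset.sum_const, Finset.card_compl, hcard]
    simp [Nat.cast_sub hn]
  rw [h1, h2]; ring
end

section
/- Let C be a weakly unital dg category over a field k. A weakly unital dg functor φ: C → D is an acyclic fibration (i.e. belongs to Fib ∩ W) if and only if φ is surjective on objects and for every pair of objects x, y of C the chain map C(x,y) → D(φx,φy) is a degreewise surjective quasi-isomorphism. -/
open scoped BigOperators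

/-- A weakly unital dg functor: a non-unital dg functor commuting with the
structure `A_∞`-functors (in particular with all the recorded Taylor
components and sending `id` to `id`). -/
structure WUFunctor {k : Type} [Field k] (C D : WUCat k) where
  obj : C.Obj → D.Obj
  map : ∀ {x y : C.Obj}, C.Hom x y →ₗ[k] D.Hom (obj x) (obj y)
  map_deg : ∀ {x y} (n : ℤ) (f : C.Hom x y), f ∈ C.deg x y n → map f ∈ D.deg _ _ n
  map_d : ∀ {x y} (f : C.Hom x y), map (C.d f) = D.d (map f)
  map_comp : ∀ {x y z} (g : C.Hom y z) (f : C.Hom x y),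
      map (C.comp g f) = D.comp (map g) (map f)
  map_idm : ∀ x, map (C.idm x) = D.idm (obj x)
  map_p2l : ∀ {x y} (f : C.Hom x y), map (C.p2l f) = D.p2l (map f)
  map_p2r : ∀ {x y} (f : C.Hom x y), map (C.p2r f) = D.p2r (map f)
  map_p2u : ∀ x, map (C.p2u x) = D.p2u (obj x)
  map_p3a : ∀ {x y z} (f : C.Hom y z) (g : C.Hom x y),
      map (C.p3a f g) = D.p3a (map f) (map g)
  map_p3b : ∀ {x y z} (f : C.Hom y z) (g : C.Hom x y),
      map (C.p3b f g) = D.p3b (map f) (map g)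
  map_p3c : ∀ {x y z} (f : C.Hom y z) (g : C.Hom x y),
      map (C.p3c f g) = D.p3c (map f) (map g)
  map_p3uuf : ∀ {x y} (f : C.Hom x y), map (C.p3uuf f) = D.p3uuf (map f)
  map_p3ufu : ∀ {x y} (f : C.Hom x y), map (C.p3ufu f) = D.p3ufu (map f)
  map_p3fuu : ∀ {x y} (f : C.Hom x y), map (C.p3fuu f) = D.p3fuu (map f)
  map_p3uuu : ∀ x, map (C.p3uuu x) = D.p3uuu (obj x)

/-- A closed degree-`0` morphism `g` is a *homotopy equivalence* (i.e. its
class in `H⁰` is an isomorphism): there are a closed degree-`0` morphism `η`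
in the other direction and degree `-1` homotopies witnessing
`η∘g ∼ id`, `g∘η ∼ id`. -/
def WUCat.IsHtpyEquiv {k : Type} [Field k] (C : WUCat k) {x y : C.Obj}
    (g : C.Hom x y) : Prop :=
  ∃ η ∈ C.deg y x 0, C.d η = 0 ∧
    ∃ hx ∈ C.deg x x (-1), C.d hx = C.comp η g - C.idm x ∧
      ∃ hy ∈ C.deg y y (-1), C.d hy = C.comp g η - C.idm y

section Stmt11
variable {k : Type} [Field k] {C D : WUCat k} (F : WUFunctor C D)

/-- (W1): `F` is a quasi-isomorphism on all Hom complexes. -/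
def W1 : Prop :=
  ∀ (x y : C.Obj),
    (∀ (n : ℤ) (v : D.Hom (F.obj x) (F.obj y)), v ∈ D.deg _ _ n → D.d v = 0 →
      ∃ u ∈ C.deg x y n, C.d u = 0 ∧ ∃ w ∈ D.deg _ _ (n - 1), F.map u = v + D.d w) ∧
    (∀ (n : ℤ) (u : C.Hom x y), u ∈ C.deg x y n → C.d u = 0 →
      (∃ w ∈ D.deg _ _ (n - 1), F.map u = D.d w) →
      ∃ z ∈ C.deg x y (n - 1), u = C.d z)

/-- (W2): `H⁰(F) : H⁰(C) → H⁰(D)` is an equivalence of `k`-linear categories: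
full, faithful, and essentially surjective (isomorphisms in `H⁰` being the
homotopy equivalences). -/
def W2 : Prop :=
  -- full on H⁰
  (∀ (x y : C.Obj) (g : D.Hom (F.obj x) (F.obj y)), g ∈ D.deg _ _ 0 → D.d g = 0 →
    ∃ f ∈ C.deg x y 0, C.d f = 0 ∧ ∃ h ∈ D.deg _ _ (-1), F.map f - g = D.d h) ∧
  -- faithful on H⁰
  (∀ (x y : C.Obj) (f f' : C.Hom x y), f ∈ C.deg x y 0 → f' ∈ C.deg x y 0 →
    C.d f = 0 → C.d f' = 0 →
    (∃ h ∈ D.deg _ _ (-1), F.map f - F.map f' = D.d h) →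
    ∃ h' ∈ C.deg x y (-1), f - f' = C.d h') ∧
  -- essentially surjective on H⁰
  (∀ z : D.Obj, ∃ (x : C.Obj), ∃ g : D.Hom (F.obj x) z,
    g ∈ D.deg _ _ 0 ∧ D.d g = 0 ∧ D.IsHtpyEquiv g)

/-- (F1): `F` is componentwise (degreewise) surjective on all Hom complexes. -/
def F1 : Prop :=
  ∀ (x y : C.Obj) (n : ℤ) (v : D.Hom (F.obj x) (F.obj y)), v ∈ D.deg _ _ n →
    ∃ u ∈ C.deg x y n, F.map u = v

/-- (F2): homotopy-equivalence lifting: for `x ∈ C` and a closed degree-`0`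
morphism `g : Fx → z` in `D` which is an isomorphism in `H⁰(D)`, there are
`y ∈ C` and a closed degree-`0` morphism `f : x → y`, an isomorphism in
`H⁰(C)`, with `F(f) = g` (in particular `F(y) = z`). -/
def F2 : Prop :=
  ∀ (x : C.Obj) (z : D.Obj) (g : D.Hom (F.obj x) z),
    g ∈ D.deg _ _ 0 → D.d g = 0 → D.IsHtpyEquiv g →
    ∃ (y : C.Obj) (f : C.Hom x y), f ∈ C.deg x y 0 ∧ C.d f = 0 ∧
      C.IsHtpyEquiv f ∧ F.obj y = z ∧ HEq (F.map f) g

/-- Degree cast helper. -/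
lemma degCast {A : WUCat k} {x y : A.Obj} {f : A.Hom x y} {m n : ℤ}
    (h : f ∈ A.deg x y m) (e : m = n) : f ∈ A.deg x y n := e ▸ h

/-- The weak identity is a homotopy equivalence. -/
lemma idm_isHtpyEquiv (A : WUCat k) (x : A.Obj) : A.IsHtpyEquiv (A.idm x) := by
  have hmem : -(A.p2l (A.idm x)) ∈ A.deg x x (-1) :=
    (A.deg x x (-1)).neg_mem (degCast (A.p2l_deg 0 (A.idm x) (A.idm_deg x)) (by norm_num))
  have hd : A.d (-(A.p2l (A.idm x))) = A.comp (A.idm x) (A.idm x) - A.idm x := by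
    have h := A.dp2l (A.idm x)
    rw [A.d_idm] at h
    simp only [map_zero, add_zero] at h
    rw [map_neg, h]
    abel
  exact ⟨A.idm x, A.idm_deg x, A.d_idm x, -(A.p2l (A.idm x)), hmem, hd,
    -(A.p2l (A.idm x)), hmem, hd⟩

/-- If `F` is a quasi-isomorphism on Hom complexes, it reflects homotopy
equivalences (among closed degree-0 morphisms). -/
lemma reflect_htpyEquiv (hW1 : W1 F) {x y : C.Obj} (f : C.Hom x y)
    (hf : f ∈ C.deg x y 0) (hdf : C.d f = 0)
    (hFf : D.IsHtpyEquiv (F.map f)) : C.IsHtpyEquiv f := by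
  obtain ⟨η, hη0, hdη, hx, hhx, hdhx, hy, hhy, hdhy⟩ := hFf
  obtain ⟨f', hf'0, hdf', w, hw, hFf'⟩ := (hW1 y x).1 0 η hη0 hdη
  have hdFf : D.d (F.map f) = 0 := by rw [← F.map_d, hdf, map_zero]
  have hFfdeg : F.map f ∈ D.deg _ _ 0 := F.map_deg 0 f hf
  have hone : ((Int.negOnePow 0 : ℤˣ) : ℤ) = 1 := by simp
  -- key computation 1
  have lz1 : D.d (D.comp w (F.map f)) = D.comp (D.d w) (F.map f) := by
    rw [D.leibniz (0 - 1) w (F.map f) hw, hdFf]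
    simp
  have key1 : F.map (C.comp f' f - C.idm x) = D.d (hx + D.comp w (F.map f)) := by
    rw [map_sub, F.map_comp, F.map_idm, hFf', map_add, map_add, lz1, hdhx]
    simp only [map_add, LinearMap.add_apply]
    abel
  -- key computation 2
  have lz2 : D.d (D.comp (F.map f) w) = D.comp (F.map f) (D.d w) := by
    rw [D.leibniz 0 (F.map f) w hFfdeg, hdFf, hone]
    simp
  have key2 : F.map (C.comp f f' - C.idm y) = D.d (hy + D.comp (F.map f) w) := by
    rw [map_sub, F.map_comp, F.map_idm, hFf', map_add, map_add, lz2, hdhy]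
    abel
  -- closedness of the two compositions
  have hdc1 : C.d (C.comp f' f - C.idm x) = 0 := by
    rw [map_sub, C.leibniz 0 f' f hf'0, hdf', hdf, C.d_idm]
    simp
  have hdc2 : C.d (C.comp f f' - C.idm y) = 0 := by
    rw [map_sub, C.leibniz 0 f f' hf, hdf, hdf', C.d_idm]
    simp
  -- memberships
  have hm1 : C.comp f' f - C.idm x ∈ C.deg x x 0 :=
    sub_mem (degCast (C.comp_deg 0 0 f' f hf'0 hf) (by norm_num)) (C.idm_deg x)
  have hm2 : C.comp f f' - C.idm y ∈ C.deg y y 0 :=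
    sub_mem (degCast (C.comp_deg 0 0 f f' hf hf'0) (by norm_num)) (C.idm_deg y)
  have hw1 : hx + D.comp w (F.map f) ∈ D.deg _ _ (0 - 1) :=
    add_mem (degCast hhx (by norm_num))
      (degCast (D.comp_deg (0 - 1) 0 w (F.map f) hw hFfdeg) (by norm_num))
  have hw2 : hy + D.comp (F.map f) w ∈ D.deg _ _ (0 - 1) :=
    add_mem (degCast hhy (by norm_num))
      (degCast (D.comp_deg 0 (0 - 1) (F.map f) w hFfdeg hw) (by norm_num))
  obtain ⟨z1, hz1m, hz1⟩ :=
    (hW1 x x).2 0 (C.comp f' f - C.idm x) hm1 hdc1 ⟨hx + D.comp w (F.map f), hw1, key1⟩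
  obtain ⟨z2, hz2m, hz2⟩ :=
    (hW1 y y).2 0 (C.comp f f' - C.idm y) hm2 hdc2 ⟨hy + D.comp (F.map f) w, hw2, key2⟩
  exact ⟨f', hf'0, hdf', z1, degCast hz1m (by norm_num), hz1.symm,
    z2, degCast hz2m (by norm_num), hz2.symm⟩

/-- A weakly unital dg functor `φ : C → D` is an acyclic
fibration (`φ ∈ Fib ∩ W`, i.e. (F1) ∧ (F2) ∧ (W1) ∧ (W2)) iff `φ` is
surjective on objects and, for every pair of objects, a degreewise surjective
quasi-isomorphism on the Hom complexes. -/
theorem stmt11 : (F1 F ∧ F2 F ∧ W1 F ∧ W2 F) ↔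
    (Function.Surjective F.obj ∧ F1 F ∧ W1 F) := by
  constructor
  · rintro ⟨h1, h2, h3, h4⟩
    refine ⟨?_, h1, h3⟩
    intro z
    obtain ⟨x, g, hg, hdg, hHE⟩ := h4.2.2 z
    obtain ⟨y, f, -, -, -, hFy, -⟩ := h2 x z g hg hdg hHE
    exact ⟨y, hFy⟩
  · rintro ⟨hsurj, hF1, hW1⟩
    -- F2
    have hF2 : F2 F := by
      intro x z g hg hdg hHE
      obtain ⟨y, rfl⟩ := hsurj z
      obtain ⟨u, hu, hdu, w, hw, hFu⟩ := (hW1 x y).1 0 g hg hdg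
      obtain ⟨w', hw', hFw'⟩ := hF1 x y (0 - 1) w hw
      have hfm : u - C.d w' ∈ C.deg x y 0 :=
        sub_mem hu (degCast (C.d_deg (0 - 1) w' hw') (by norm_num))
      have hfd : C.d (u - C.d w') = 0 := by
        rw [map_sub, hdu, C.d_sq]
        simp
      have hFeq : F.map (u - C.d w') = g := by
        rw [map_sub, F.map_d, hFw', hFu]
        abel
      have hHE' : C.IsHtpyEquiv (u - C.d w') := by
        refine reflect_htpyEquiv F hW1 _ hfm hfd ?_
        rw [hFeq]; exact hHE
      exact ⟨y, u - C.d w', hfm, hfd, hHE', rfl, heq_of_eq hFeq⟩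
    -- W2
    have hW2 : W2 F := by
      refine ⟨?_, ?_, ?_⟩
      · intro x y g hg hdg
        obtain ⟨u, hu, hdu, w, hw, hFu⟩ := (hW1 x y).1 0 g hg hdg
        exact ⟨u, hu, hdu, w, degCast hw (by norm_num), by rw [hFu]; abel⟩
      · intro x y f f' hf hf' hdf hdf' ⟨h, hh, hFh⟩
        obtain ⟨z, hz, hzz⟩ := (hW1 x y).2 0 (f - f') (sub_mem hf hf')
          (by rw [map_sub, hdf, hdf']; simp)
          ⟨h, degCast hh (by norm_num), by rw [map_sub, hFh]⟩
        exact ⟨z, degCast hz (by norm_num), hzz⟩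
      · intro z
        obtain ⟨x, rfl⟩ := hsurj z
        exact ⟨x, D.idm _, D.idm_deg _, D.d_idm _, idm_isHtpyEquiv D _⟩
    exact ⟨hF1, hF2, hW1, hW2⟩

end Stmt11
end

section
/- Let φ: C → D be a weakly unital dg functor between weakly unital dg categories over a field k. Then φ has the right lifting property with respect to all the generating maps β(n): C(n) → P(n), n ∈ ℤ, if and only if for all objects x, y of C the chain map φ: C(x,y) → D(φx,φy) is a degreewise surjective quasi-isomorphism. -/
open scoped BigOperators

/-- The right lifting property of `φ : C → D` with respect to the generating
cofibrations `β(n) : C(n) → P(n)`, `n ∈ ℤ`, unfolded via the freeness of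
`C(n) = FU(S(n-1))` and `P(n) = FU(D(n))`:

a commutative square over `β(n)` amounts to a choice of two objects `x, y` of
`C`, a closed homogeneous `u ∈ C(x,y)` (the image of the generator of
`S(n-1)`) and a homogeneous `v ∈ D(φx, φy)` one degree lower with
`dv = φ(u)` (the images of the generators of `D(n)`); a lift is a
homogeneous `w ∈ C(x,y)` with `dw = u` and `φ(w) = v`. -/
def RLPbeta {k : Type} [Field k] {C D : WUCat k} (φ : WUFunctor C D) : Prop :=
  ∀ (x y : C.Obj) (m : ℤ) (u : C.Hom x y), u ∈ C.deg x y m → C.d u = 0 →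
    ∀ v : D.Hom (φ.obj x) (φ.obj y), v ∈ D.deg _ _ (m - 1) → D.d v = φ.map u →
      ∃ w ∈ C.deg x y (m - 1), C.d w = u ∧ φ.map w = v

/-- A weakly unital dg functor `φ : C → D` has the right
lifting property with respect to all the generating maps
`β(n) : C(n) → P(n)`, `n ∈ ℤ`, iff for all objects `x, y` of `C` the map
`φ : C(x,y) → D(φx, φy)` is a degreewise surjective quasi-isomorphism of
complexes. -/
theorem stmt18 (k : Type) [Field k] {C D : WUCat k} (φ : WUFunctor C D) :
    RLPbeta φ ↔
      ∀ (x y : C.Obj),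
        -- degreewise surjectivity
        ( (∀ (n : ℤ) (v : D.Hom (φ.obj x) (φ.obj y)), v ∈ D.deg _ _ n →
            ∃ u ∈ C.deg x y n, φ.map u = v) ∧
        -- quasi-isomorphism (surjectivity and injectivity on cohomology)
          (∀ (n : ℤ) (v : D.Hom (φ.obj x) (φ.obj y)), v ∈ D.deg _ _ n →
            D.d v = 0 → ∃ u ∈ C.deg x y n, C.d u = 0 ∧
              ∃ w ∈ D.deg _ _ (n - 1), φ.map u = v + D.d w) ∧
          (∀ (n : ℤ) (u : C.Hom x y), u ∈ C.deg x y n → C.d u = 0 →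
            (∃ w ∈ D.deg _ _ (n - 1), φ.map u = D.d w) →
            ∃ z ∈ C.deg x y (n - 1), u = C.d z) ) := by
  constructor
  · intro hR x y
    -- surjectivity onto closed elements
    have hclosed : ∀ (n : ℤ) (v : D.Hom (φ.obj x) (φ.obj y)), v ∈ D.deg _ _ n →
        D.d v = 0 → ∃ u ∈ C.deg x y n, C.d u = 0 ∧ φ.map u = v := by
      intro n v hv hdv
      obtain ⟨w, hw, hdw, hφw⟩ := hR x y (n + 1) 0 (Submodule.zero_mem _) (by simp)
        v (by rwa [add_sub_cancel_right]) (by simp [hdv])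
      exact ⟨w, by rwa [add_sub_cancel_right] at hw, hdw, hφw⟩
    refine ⟨?_, ?_, ?_⟩
    · -- degreewise surjectivity
      intro n v hv
      obtain ⟨u, hu, hdu, hφu⟩ := hclosed (n + 1) (D.d v) (D.d_deg n v hv) (D.d_sq v)
      obtain ⟨w, hw, hdw, hφw⟩ := hR x y (n + 1) u hu hdu v
        (by rwa [add_sub_cancel_right]) hφu.symm
      exact ⟨w, by rwa [add_sub_cancel_right] at hw, hφw⟩
    · -- surjectivity on cohomology
      intro n v hv hdv
      obtain ⟨u, hu, hdu, hφu⟩ := hclosed n v hv hdv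
      exact ⟨u, hu, hdu, 0, Submodule.zero_mem _, by simp [hφu]⟩
    · -- injectivity on cohomology
      rintro n u hu hdu ⟨w, hw, hφu⟩
      obtain ⟨z, hz, hdz, -⟩ := hR x y n u hu hdu w hw hφu.symm
      exact ⟨z, hz, hdz.symm⟩
  · intro h x y m u hu hdu v hv hdv
    obtain ⟨hsurj, hcoh, hinj⟩ := h x y
    obtain ⟨z, hz, huz⟩ := hinj m u hu hdu ⟨v, hv, hdv.symm⟩
    have hdφz : D.d (φ.map z) = φ.map u := by rw [← φ.map_d, ← huz]
    have hmem : v - φ.map z ∈ D.deg _ _ (m - 1) :=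
      Submodule.sub_mem _ hv (φ.map_deg _ z hz)
    have hcl : D.d (v - φ.map z) = 0 := by
      rw [map_sub, hdφz, hdv, sub_self]
    obtain ⟨a, ha, hda, b, hb, hφa⟩ := hcoh (m - 1) (v - φ.map z) hmem hcl
    obtain ⟨c, hc, hφc⟩ := hsurj (m - 1 - 1) b hb
    refine ⟨z + a - C.d c, ?_, ?_, ?_⟩
    · refine Submodule.sub_mem _ (Submodule.add_mem _ hz ha) ?_
      have := C.d_deg (m - 1 - 1) c hc
      rwa [sub_add_cancel] at this
    · rw [map_sub, map_add, ← huz, hda, add_zero, C.d_sq, sub_zero]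
    · rw [map_sub, map_add, φ.map_d, hφc, hφa]
      abel
end
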